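/- Let M ⊆ ℝ² be a staircase connected set which is the closure of its bounded and connected interior. A point a ∈ M is an s-extreme point of M if and only if hw_a(M) = 0 or vw_a(M) = 0. -/

import Mathlib

open Set MeasureTheory Bornology
open scoped ENNReal

noncomputable section

/-- `ℝ^d` as Euclidean space. -/
abbrev EucR (d : ℕ) := EuclideanSpace ℝ (Fin d)

/-- The segment from `x` to `y` is parallel to a coordinate axis
(all coordinates except possibly one agree). -/
def IsOrthSeg {d : ℕ} (x y : EucR d) : Prop :=
  ∃ i : Fin d, ∀ j, j ≠ i → x j = y j

/-- `p 0, p 1, …, p n` is an orthogonal polygonal path contained in `S`. -/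
def IsOrthPathIn {d : ℕ} (S : Set (EucR d)) (p : ℕ → EucR d) (n : ℕ) : Prop :=
  ∀ k, k < n → IsOrthSeg (p k) (p (k + 1)) ∧ segment ℝ (p k) (p (k + 1)) ⊆ S

/-- `S` is orthogonally connected. -/
def OrthConnected {d : ℕ} (S : Set (EucR d)) : Prop :=
  ∀ x ∈ S, ∀ y ∈ S, ∃ n : ℕ, ∃ p : ℕ → EucR d,
    p 0 = x ∧ p n = y ∧ IsOrthPathIn S p n

/-- An orthogonal path is a staircase if all edges parallel to the same axis
point in the same direction. -/
def IsStaircaseIn {d : ℕ} (S : Set (EucR d)) (p : ℕ → EucR d) (n : ℕ) : Prop :=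
  IsOrthPathIn S p n ∧
    ∀ k, k < n → ∀ l, l < n → ∀ i : Fin d,
      (∀ j, j ≠ i → p k j = p (k + 1) j) → (∀ j, j ≠ i → p l j = p (l + 1) j) →
        0 ≤ (p (k + 1) i - p k i) * (p (l + 1) i - p l i)

/-- `S` is staircase connected. -/
def StaircaseConnected {d : ℕ} (S : Set (EucR d)) : Prop :=
  ∀ x ∈ S, ∀ y ∈ S, ∃ n : ℕ, ∃ p : ℕ → EucR d,
    p 0 = x ∧ p n = y ∧ IsStaircaseIn S p n

/-- `S` is orthogonally convex. -/
def OrthConvex {d : ℕ} (S : Set (EucR d)) : Prop :=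
  ∀ x ∈ S, ∀ y ∈ S, IsOrthSeg x y → segment ℝ x y ⊆ S

/-- A convex body: compact convex with nonempty interior. -/
def IsConvexBody {d : ℕ} (K : Set (EucR d)) : Prop :=
  Convex ℝ K ∧ IsCompact K ∧ (interior K).Nonempty

/-- The point of `ℝ²` with coordinates `(a, b)`. -/
def pt2 (a b : ℝ) : EucR 2 := (WithLp.equiv 2 (Fin 2 → ℝ)).symm ![a, b]

/-- Horizontal width of `S` at `x`: the length of the connected component
containing `x` of the intersection of `S` with the horizontal line through `x`. -/
def hw (S : Set (EucR 2)) (x : EucR 2) : ℝ≥0∞ :=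
  volume (connectedComponentIn {t : ℝ | pt2 t (x 1) ∈ S} (x 0))

/-- Vertical width of `S` at `x`. -/
def vw (S : Set (EucR 2)) (x : EucR 2) : ℝ≥0∞ :=
  volume (connectedComponentIn {t : ℝ | pt2 (x 0) t ∈ S} (x 1))

/-- The set of unit directions from `x` towards points of `K`. -/
def dirSet (x : EucR 2) (K : Set (EucR 2)) : Set (EucR 2) :=
  {u | ∃ y ∈ K, y ≠ x ∧ u = ‖y - x‖⁻¹ • (y - x)}

/-- `α_x(K)`: the angular (1-dimensional Hausdorff) measure of the set of unit
directions from `x` towards other points of `K`. -/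
def angMeasure (x : EucR 2) (K : Set (EucR 2)) : ℝ≥0∞ :=
  μH[1] (dirSet x K)

/-- The half-line from `x` through `y`. -/
def rayFrom (x y : EucR 2) : Set (EucR 2) := {z | ∃ t : ℝ, 0 ≤ t ∧ z = x + t • (y - x)}

/-- `T_x(K)`: the union of the half-lines from `x` through the points of `K \ {x}`. -/
def TCone (x : EucR 2) (K : Set (EucR 2)) : Set (EucR 2) := ⋃ y ∈ K \ {x}, rayFrom x y

/-- `K` is obtuse: at every boundary point `x`, either `α_x(K) > π/2`, or
`α_x(K) = π/2` and `T_x(K) \ {x}` is not open. -/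
def Obtuse (K : Set (EucR 2)) : Prop :=
  ∀ x ∈ frontier K,
    ENNReal.ofReal (Real.pi / 2) < angMeasure x K ∨
      (angMeasure x K = ENNReal.ofReal (Real.pi / 2) ∧ ¬ IsOpen (TCone x K \ {x}))

/-- Inclusion of `ℝ² × ℝ` into `ℝ³`. -/
def incl3 (q : EucR 2) (t : ℝ) : EucR 3 := (WithLp.equiv 2 (Fin 3 → ℝ)).symm ![q 0, q 1, t]

/-- A piece of a continuum `C`: the closure of a connected component of
`C \ {x}` for some cut point `x` of `C`. -/
def IsPiece (C P : Set (EucR 2)) : Prop :=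
  ∃ x ∈ C, ¬ IsPreconnected (C \ {x}) ∧
    ∃ y ∈ C \ {x}, P = closure (connectedComponentIn (C \ {x}) y)

/-- `f` is unimodal on `[a,b]`: non-decreasing on `[a,c]`, non-increasing on `[c,b]`
for some `c ∈ (a,b)`. -/
def Unimodal (f : ℝ → ℝ) (a b : ℝ) : Prop :=
  ∃ c ∈ Ioo a b, MonotoneOn f (Icc a c) ∧ AntitoneOn f (Icc c b)

/-- `a` is an s-extreme point of `M`: it belongs to a staircase in `M` only as an
endpoint. -/
def SExtreme (M : Set (EucR 2)) (a : EucR 2) : Prop :=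
  a ∈ M ∧ ∀ n : ℕ, ∀ γ : ℕ → EucR 2, IsStaircaseIn M γ n →
    a ∈ ⋃ k ∈ Set.Iio n, segment ℝ (γ k) (γ (k + 1)) → a = γ 0 ∨ a = γ n

/-- `M ⊆ ℝ²` is a strip: the preimage of an interval of `ℝ` under a nonzero
linear functional (this includes half-planes and the whole plane). -/
def IsStrip (M : Set (EucR 2)) : Prop :=
  ∃ f : EucR 2 →ₗ[ℝ] ℝ, f ≠ 0 ∧ ∃ I : Set ℝ, I.OrdConnected ∧ M = f ⁻¹' I

end

/-!
Along a staircase every coordinate is monotone, so a staircase connected set is orthogonally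
convex, and `hw_a(M) = 0` then says that the horizontal line through `a` meets `M` only in `a`
(likewise for `vw`). If both widths are positive, `a` is the corner of an L-shaped staircase
in `M`. If the line `ℓ` through `a` meets `M` only in `a`, the connected open set `int M`
misses `ℓ`, so `M = cl (int M)` lies in a closed half-plane bounded by `ℓ`; the endpoints of a
staircase through `a` then lie strictly on one side of `ℓ`, and the monotone coordinate cannot
come back to `ℓ` in between.
-/

open Topology

lemma exists_mem_uIcc_succ_of_mem_uIcc {α : Type*} [LinearOrder α] (f : ℕ → α) (n : ℕ) {y : α}
    (hy : y ∈ uIcc (f 0) (f (n + 1))) : ∃ k ≤ n, y ∈ uIcc (f k) (f (k + 1)) := by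
  induction n with
  | zero => exact ⟨0, le_rfl, hy⟩
  | succ n ih =>
    rcases uIcc_subset_uIcc_union_uIcc hy with hy | hy
    · obtain ⟨k, hk, hyk⟩ := ih hy
      exact ⟨k, by omega, hyk⟩
    · exact ⟨n + 1, le_rfl, hy⟩

lemma mem_uIcc_of_forall_mul_sub_nonneg {R : Type*} [CommRing R] [LinearOrder R]
    [IsStrictOrderedRing R] {f : ℕ → R} {n : ℕ}
    (hf : ∀ k < n, ∀ l < n, 0 ≤ (f (k + 1) - f k) * (f (l + 1) - f l)) {k : ℕ}
    (hk : k ≤ n) : f k ∈ uIcc (f 0) (f n) := by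
  have h0 : 0 ∈ Iic n := Nat.zero_le n
  have hn : n ∈ Iic n := le_refl n
  by_cases hmono : ∀ l < n, f l ≤ f (l + 1)
  · have hf' : MonotoneOn f (Iic n) := monotoneOn_of_le_succ ordConnected_Iic fun l _ _ hl => by
      simp only [Order.succ_eq_add_one, mem_Iic] at hl ⊢
      exact hmono l (by omega)
    exact mem_uIcc_of_le (hf' h0 hk k.zero_le) (hf' hk hn hk)
  · obtain ⟨l, hl, hfl⟩ : ∃ l < n, f (l + 1) < f l := by simpa using hmono
    have hf' : AntitoneOn f (Iic n) := antitoneOn_of_succ_le ordConnected_Iic fun j _ _ hj => by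
      simp only [Order.succ_eq_add_one, mem_Iic] at hj ⊢
      nlinarith [hf j (by omega) l hl]
    exact mem_uIcc_of_ge (hf' hk hn hk) (hf' h0 hk k.zero_le)

section Staircase

variable {d : ℕ} {S : Set (EucR d)} {p : ℕ → EucR d} {n k : ℕ}

lemma apply_mem_segment {x y z : EucR d} (h : x ∈ segment ℝ y z) (i : Fin d) :
    x i ∈ segment ℝ (y i) (z i) := by
  obtain ⟨s, t, hs, ht, hst, rfl⟩ := h
  exact ⟨s, t, hs, ht, hst, by simp⟩

lemma mem_segment_of_forall_ne_apply_eq {x y w : EucR d} {i : Fin d}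
    (hx : ∀ j ≠ i, x j = w j) (hy : ∀ j ≠ i, y j = w j) (hw : w i ∈ uIcc (x i) (y i)) :
    w ∈ segment ℝ x y := by
  rw [← segment_eq_uIcc] at hw
  obtain ⟨s, t, hs, ht, hst, hwi⟩ := hw
  refine ⟨s, t, hs, ht, hst, ?_⟩
  ext j
  by_cases hj : j = i
  · subst hj
    simpa using hwi
  · simp [hx j hj, hy j hj, ← add_mul, hst]

lemma IsOrthSeg.forall_ne_apply_eq {x y : EucR d} (h : IsOrthSeg x y) {i : Fin d}
    (hi : x i ≠ y i) : ∀ j ≠ i, x j = y j := by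
  obtain ⟨i', hi'⟩ := h
  obtain rfl : i = i' := by_contra fun hne => hi (hi' i hne)
  exact hi'

lemma IsOrthPathIn.mem (h : IsOrthPathIn S p n) (hn : n ≠ 0) (hk : k ≤ n) : p k ∈ S := by
  rcases hk.lt_or_eq with hk | rfl
  · exact (h k hk).2 (left_mem_segment ℝ _ _)
  · obtain ⟨k, rfl⟩ := Nat.exists_eq_succ_of_ne_zero hn
    exact (h k k.lt_succ_self).2 (right_mem_segment ℝ _ _)

lemma IsStaircaseIn.mul_sub_apply_nonneg (h : IsStaircaseIn S p n) (i : Fin d) {l : ℕ}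
    (hk : k < n) (hl : l < n) : 0 ≤ (p (k + 1) i - p k i) * (p (l + 1) i - p l i) := by
  by_cases hki : p k i = p (k + 1) i
  · simp [hki]
  by_cases hli : p l i = p (l + 1) i
  · simp [hli]
  exact h.2 k hk l hl i ((h.1 k hk).1.forall_ne_apply_eq hki)
    ((h.1 l hl).1.forall_ne_apply_eq hli)

lemma IsStaircaseIn.apply_mem_uIcc (h : IsStaircaseIn S p n) (i : Fin d) (hk : k ≤ n) :
    p k i ∈ uIcc (p 0 i) (p n i) :=
  mem_uIcc_of_forall_mul_sub_nonneg (f := fun k => p k i)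
    (fun _ hk _ hl => h.mul_sub_apply_nonneg i hk hl) hk

lemma IsStaircaseIn.apply_mem_uIcc_of_mem_segment (h : IsStaircaseIn S p n) (i : Fin d)
    (hk : k < n) {x : EucR d} (hx : x ∈ segment ℝ (p k) (p (k + 1))) :
    x i ∈ uIcc (p 0 i) (p n i) := by
  have hxi := apply_mem_segment hx i
  rw [segment_eq_uIcc] at hxi
  exact uIcc_subset_uIcc (h.apply_mem_uIcc i hk.le) (h.apply_mem_uIcc i hk) hxi

theorem StaircaseConnected.orthConvex (hS : StaircaseConnected S) : OrthConvex S := by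
  intro x hx z hz ⟨i, hxz⟩ w hw
  obtain ⟨n, p, rfl, rfl, hp⟩ := hS x hx z hz
  have hconst : ∀ k ≤ n, ∀ j ≠ i, p k j = w j := by
    intro k hk j hj
    have hwj := apply_mem_segment hw j
    have hkj := hp.apply_mem_uIcc j hk
    rw [hxz j hj, segment_same] at hwj
    rw [hxz j hj, uIcc_self] at hkj
    rw [mem_singleton_iff.1 hkj, mem_singleton_iff.1 hwj]
  cases n with
  | zero =>
    rw [segment_same, mem_singleton_iff] at hw
    exact hw ▸ hx
  | succ n =>
    have hwi := apply_mem_segment hw i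
    rw [segment_eq_uIcc] at hwi
    obtain ⟨k, hk, hwk⟩ := exists_mem_uIcc_succ_of_mem_uIcc (fun k => p k i) n hwi
    exact (hp.1 k (by omega)).2 <|
      mem_segment_of_forall_ne_apply_eq (hconst k (by omega)) (hconst (k + 1) (by omega)) hwk

end Staircase

lemma volume_connectedComponentIn_eq_zero_iff {T : Set ℝ} {s : ℝ} :
    volume (connectedComponentIn T s) = 0 ↔ ∀ t, uIcc s t ⊆ T → t = s := by
  constructor
  · intro h t ht
    have hsub := isPreconnected_uIcc.subset_connectedComponentIn left_mem_uIcc ht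
    have := measure_mono_null hsub h
    rwa [Real.volume_interval, ENNReal.ofReal_eq_zero, abs_nonpos_iff, sub_eq_zero] at this
  · intro h
    refine measure_mono_null (fun t ht => h t ?_) (Real.volume_singleton (a := s))
    have hs : s ∈ connectedComponentIn T s :=
      mem_connectedComponentIn (connectedComponentIn_nonempty_iff.1 ⟨t, ht⟩)
    exact (isPreconnected_connectedComponentIn.ordConnected.uIcc_subset hs ht).trans
      (connectedComponentIn_subset T s)

lemma volume_connectedComponentIn_preimage_eq_zero_iff {d : ℕ} {M : Set (EucR d)} {a : EucR d}
    {i : Fin d} (hM : OrthConvex M) (ha : a ∈ M) {L : ℝ → EucR d} (hLi : ∀ t, L t i = t)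
    (hL : ∀ t, ∀ j ≠ i, L t j = a j) :
    volume (connectedComponentIn (L ⁻¹' M) (a i)) = 0 ↔
      ∀ z ∈ M, (∀ j ≠ i, z j = a j) → z = a := by
  rw [volume_connectedComponentIn_eq_zero_iff]
  constructor
  · intro h z hz hza
    have hseg := hM a ha z hz ⟨i, fun j hj => (hza j hj).symm⟩
    have hzi : z i = a i := h (z i) fun t ht => hseg <|
      mem_segment_of_forall_ne_apply_eq (fun j hj => (hL t j hj).symm)
        (fun j hj => (hza j hj).trans (hL t j hj).symm) (by rwa [hLi])
    ext j
    by_cases hj : j = i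
    · exact hj ▸ hzi
    · exact hza j hj
  · intro h t ht
    have hLt := h (L t) (ht right_mem_uIcc) (hL t)
    rw [← hLi t, hLt]

@[simp] lemma pt2_apply_zero (x y : ℝ) : pt2 x y 0 = x := rfl
@[simp] lemma pt2_apply_one (x y : ℝ) : pt2 x y 1 = y := rfl

lemma hw_eq_zero_iff {M : Set (EucR 2)} {a : EucR 2} (hM : OrthConvex M) (ha : a ∈ M) :
    hw M a = 0 ↔ ∀ z ∈ M, z 1 = a 1 → z = a := by
  have := volume_connectedComponentIn_preimage_eq_zero_iff hM ha (i := 0)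
    (L := fun t => pt2 t (a 1)) (pt2_apply_zero · _) (by simp [Fin.forall_fin_two])
  exact this.trans (by simp [Fin.forall_fin_two])

lemma vw_eq_zero_iff {M : Set (EucR 2)} {a : EucR 2} (hM : OrthConvex M) (ha : a ∈ M) :
    vw M a = 0 ↔ ∀ z ∈ M, z 0 = a 0 → z = a := by
  have := volume_connectedComponentIn_preimage_eq_zero_iff hM ha (i := 1)
    (L := fun t => pt2 (a 0) t) (pt2_apply_one _) (by simp [Fin.forall_fin_two])
  exact this.trans (by simp [Fin.forall_fin_two])

lemma apply_ne_of_mem_interior {d : ℕ} {M : Set (EucR d)} {a : EucR d} {c e : Fin d}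
    (hce : c ≠ e) (hsing : ∀ z ∈ M, z e = a e → z = a) :
    ∀ u ∈ interior M, u e ≠ a e := by
  intro u hu hue
  obtain rfl := hsing u (interior_subset hu) hue
  set v := EuclideanSpace.single c (1 : ℝ)
  have hcont : Continuous fun t : ℝ => u + t • v := by fun_prop
  have hev : ∀ᶠ t in 𝓝[≠] (0 : ℝ), u + t • v ∈ M := by
    refine nhdsWithin_le_nhds (hcont.continuousAt.preimage_mem_nhds ?_)
    simpa using Filter.mem_of_superset (isOpen_interior.mem_nhds hu) interior_subset
  obtain ⟨t, htM, ht⟩ := (hev.and self_mem_nhdsWithin).exists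
  have := congrArg (· c) (hsing _ htM (by simp [v, hce.symm]))
  simp [v] at this
  exact ht this

lemma mapsTo_Ici_or_Iic_of_forall_apply_eq {d : ℕ} {M : Set (EucR d)} {a : EucR d} {c e : Fin d}
    (hcl : M ⊆ closure (interior M)) (hconn : IsPreconnected (interior M)) (hce : c ≠ e)
    (hsing : ∀ z ∈ M, z e = a e → z = a) :
    MapsTo (· e) M (Ici (a e)) ∨ MapsTo (· e) M (Iic (a e)) := by
  have hcont : Continuous fun z : EucR d => z e := by fun_prop
  rcases hconn.mapsTo_Ioi_or_Iio hcont.continuousOn (apply_ne_of_mem_interior hce hsing)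
    with h | h
  · exact .inl (((h.mono_right Ioi_subset_Ici_self).closure_left hcont isClosed_Ici).mono_left hcl)
  · exact .inr (((h.mono_right Iio_subset_Iic_self).closure_left hcont isClosed_Iic).mono_left hcl)

lemma sExtreme_of_mapsTo {M : Set (EucR 2)} {a : EucR 2} {e : Fin 2} (ha : a ∈ M)
    (hsing : ∀ z ∈ M, z e = a e → z = a)
    (hside : MapsTo (· e) M (Ici (a e)) ∨ MapsTo (· e) M (Iic (a e))) : SExtreme M a := by
  refine ⟨ha, fun n γ hγ hmem => ?_⟩
  simp only [mem_iUnion, mem_Iio, exists_prop] at hmem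
  obtain ⟨k, hk, hak⟩ := hmem
  by_contra! hend
  have hM : ∀ l ≤ n, γ l ∈ M := fun l hl => hγ.1.mem (by omega) hl
  have h0 : γ 0 e ≠ a e := fun h => hend.1 (hsing _ (hM 0 n.zero_le) h).symm
  have hn : γ n e ≠ a e := fun h => hend.2 (hsing _ (hM n le_rfl) h).symm
  have hae := hγ.apply_mem_uIcc_of_mem_segment e hk hak
  rcases hside with hside | hside
  · exact lt_irrefl (a e) <| ordConnected_Ioi.uIcc_subset
      (lt_of_le_of_ne (hside (hM 0 n.zero_le)) h0.symm)
      (lt_of_le_of_ne (hside (hM n le_rfl)) hn.symm) hae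
  · exact lt_irrefl (a e) <| ordConnected_Iio.uIcc_subset
      (lt_of_le_of_ne (hside (hM 0 n.zero_le)) h0)
      (lt_of_le_of_ne (hside (hM n le_rfl)) hn) hae

lemma not_sExtreme_of_mem_of_mem {M : Set (EucR 2)} {a z w : EucR 2} (hM : OrthConvex M)
    (ha : a ∈ M) (hzM : z ∈ M) (hz1 : z 1 = a 1) (hza : z ≠ a) (hwM : w ∈ M)
    (hw0 : w 0 = a 0) (hwa : w ≠ a) : ¬ SExtreme M a := by
  have hz0 : z 0 ≠ a 0 := fun h => hza (by ext j; fin_cases j <;> assumption)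
  have hw1 : w 1 ≠ a 1 := fun h => hwa (by ext j; fin_cases j <;> assumption)
  let γ : ℕ → EucR 2 := fun | 0 => z | 1 => a | _ => w
  have hγ : IsStaircaseIn M γ 2 := by
    refine ⟨fun k hk => ?_, fun k hk l hl i hki hli => ?_⟩
    · interval_cases k
      · exact ⟨⟨0, by simp [Fin.forall_fin_two, γ, hz1]⟩,
          hM z hzM a ha ⟨0, by simp [Fin.forall_fin_two, hz1]⟩⟩
      · exact ⟨⟨1, by simp [Fin.forall_fin_two, γ, hw0]⟩,
          hM a ha w hwM ⟨1, by simp [Fin.forall_fin_two, hw0]⟩⟩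
    · interval_cases k <;> interval_cases l <;> try exact mul_self_nonneg _
      all_goals fin_cases i <;> simp_all [γ, Fin.forall_fin_two]
  intro h
  rcases h.2 2 γ hγ (mem_biUnion (x := 0) (by simp) (right_mem_segment ℝ z a)) with h | h
  · exact hza h.symm
  · exact hwa h.symm

theorem sExtreme_iff_width_zero_general (M : Set (EucR 2)) (hM : StaircaseConnected M)
    (hcl : M = closure (interior M))
    (hconn : IsConnected (interior M)) :
    ∀ a ∈ M, (SExtreme M a ↔ (hw M a = 0 ∨ vw M a = 0)) := by
  intro a ha
  have hoc := hM.orthConvex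
  rw [hw_eq_zero_iff hoc ha, vw_eq_zero_iff hoc ha]
  constructor
  · intro hext
    by_contra! h
    obtain ⟨⟨z, hzM, hz1, hza⟩, ⟨w, hwM, hw0, hwa⟩⟩ := h
    exact not_sExtreme_of_mem_of_mem hoc ha hzM hz1 hza hwM hw0 hwa hext
  · rintro (hsing | hsing)
    · exact sExtreme_of_mapsTo ha hsing <|
        mapsTo_Ici_or_Iic_of_forall_apply_eq hcl.subset hconn.isPreconnected zero_ne_one hsing
    · exact sExtreme_of_mapsTo ha hsing <|
        mapsTo_Ici_or_Iic_of_forall_apply_eq hcl.subset hconn.isPreconnected one_ne_zero hsing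

/-- Let `M ⊆ ℝ²` be staircase connected and the closure of its bounded connected
interior. A point `a ∈ M` is s-extreme iff `hw_a(M) = 0` or `vw_a(M) = 0`. -/
theorem sExtreme_iff_width_zero (M : Set (EucR 2)) (hM : StaircaseConnected M)
    (hcl : M = closure (interior M)) (hbd : IsBounded (interior M))
    (hconn : IsConnected (interior M)) :
    ∀ a ∈ M, (SExtreme M a ↔ (hw M a = 0 ∨ vw M a = 0)) :=
  sExtreme_iff_width_zero_general M hM hcl hconn
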